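/- For an invertible 2×2 block matrix K = [[A, U C Vᵀ],[W D Xᵀ, B]] with A, B square and invertible, the inverse K⁻¹ has off-diagonal blocks of rank at most the ranks of the corresponding off-diagonal blocks of K: the (1,2) block of K⁻¹ equals −A⁻¹ U C Vᵀ S⁻¹ where S = B − W D Xᵀ A⁻¹ U C Vᵀ is the Schur complement, hence has rank at most the inner dimension of U C Vᵀ. -/
import Mathlib


open Matrix

/-- the inverse of an invertible 2×2 block matrix with low-rank
off-diagonal blocks has low-rank off-diagonal blocks: the (1,2) block of the
inverse is `-A⁻¹ U C Vᵀ S⁻¹`, of rank at most `r`. -/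
theorem inverse_offdiagonal_lowrank
    (n m r s : ℕ)
    (A : Matrix (Fin n) (Fin n) ℝ) (B : Matrix (Fin m) (Fin m) ℝ)
    (U : Matrix (Fin n) (Fin r) ℝ) (C : Matrix (Fin r) (Fin r) ℝ)
    (V : Matrix (Fin m) (Fin r) ℝ)
    (W : Matrix (Fin m) (Fin s) ℝ) (D : Matrix (Fin s) (Fin s) ℝ)
    (X : Matrix (Fin n) (Fin s) ℝ)
    [Invertible A] [Invertible B]
    (hS : IsUnit (B - W * D * X.transpose * A⁻¹ * (U * C * V.transpose))) :
    IsUnit (Matrix.fromBlocks A (U * C * V.transpose) (W * D * X.transpose) B) ∧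
    Matrix.toBlocks₁₂
        (Matrix.fromBlocks A (U * C * V.transpose) (W * D * X.transpose) B)⁻¹ =
      -(A⁻¹ * (U * C * V.transpose) *
        (B - W * D * X.transpose * A⁻¹ * (U * C * V.transpose))⁻¹) ∧
    (Matrix.toBlocks₁₂
        (Matrix.fromBlocks A (U * C * V.transpose) (W * D * X.transpose) B)⁻¹).rank
      ≤ r := by
  set P := U * C * V.transpose with hP
  set Q := W * D * X.transpose with hQ
  have hSA : B - Q * A⁻¹ * P = B - Q * ⅟A * P := by
    rw [Matrix.invOf_eq_nonsing_inv]
  have hS' : B - Q * ⅟A * P = B - Q * A⁻¹ * P := hSA.symm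
  have hSeq : B - Q * A⁻¹ * P = B - Q * A⁻¹ * P := rfl
  have hS2 : IsUnit (B - Q * ⅟A * P) := by
    rw [← hSA]
    simpa [mul_assoc] using hS
  letI : Invertible (B - Q * ⅟A * P) := hS2.invertible
  letI iK : Invertible (Matrix.fromBlocks A P Q B) :=
    Matrix.fromBlocks₁₁Invertible A P Q B
  have hKunit : IsUnit (Matrix.fromBlocks A P Q B) := isUnit_of_invertible _
  have hinv : (Matrix.fromBlocks A P Q B)⁻¹ = ⅟(Matrix.fromBlocks A P Q B) :=
    (Matrix.invOf_eq_nonsing_inv _).symm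
  have hblock : Matrix.toBlocks₁₂ (Matrix.fromBlocks A P Q B)⁻¹ =
      -(A⁻¹ * P * (B - Q * A⁻¹ * P)⁻¹) := by
    rw [hinv, Matrix.invOf_fromBlocks₁₁_eq]
    simp only [Matrix.toBlocks_fromBlocks₁₂]
    rw [Matrix.invOf_eq_nonsing_inv (B - Q * ⅟A * P), Matrix.invOf_eq_nonsing_inv A]
  refine ⟨hKunit, ?_, ?_⟩
  · simpa [mul_assoc] using hblock
  · rw [hblock]
    have h1 : -(A⁻¹ * P * (B - Q * A⁻¹ * P)⁻¹) =
        A⁻¹ * U * (C * V.transpose * (-(B - Q * A⁻¹ * P)⁻¹)) := by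
      simp only [hP, Matrix.mul_assoc, Matrix.mul_neg]
    rw [h1]
    calc (A⁻¹ * U * (C * V.transpose * (-(B - Q * A⁻¹ * P)⁻¹))).rank
        ≤ (A⁻¹ * U).rank := Matrix.rank_mul_le_left _ _
      _ ≤ r := le_trans (Matrix.rank_le_card_width _) (by simp)
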